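/- arXiv:1109.4622 — 4 statements merged into one kernel-verified Lean document; each statement's English description precedes it below -/
import Mathlib

section
/- If A is a simple graph on a vertices and B a simple graph on b vertices (disjoint vertex sets), and A × B denotes the join (all edges between A and B added), then P(λ, A × B) = (λ − a − b) · P(λ − b, A) · P(λ − a, B), where L(λ, H) = λ·P(λ, H) is the Laplacian characteristic polynomial. -/
/-- The join `A × B` of two graphs on disjoint vertex sets: keep the edges of `A` and `B`
and add all edges between `V(A)` and `V(B)`. -/
def SimpleGraph.join {α β : Type*} (A : SimpleGraph α) (B : SimpleGraph β) :
    SimpleGraph (α ⊕ β) where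
  Adj x y :=
    match x, y with
    | Sum.inl a, Sum.inl a' => A.Adj a a'
    | Sum.inr b, Sum.inr b' => B.Adj b b'
    | Sum.inl _, Sum.inr _ => True
    | Sum.inr _, Sum.inl _ => True
  symm := by
    constructor
    rintro (a | a) (b | b) h
    · exact A.symm.symm _ _ h
    · trivial
    · trivial
    · exact B.symm.symm _ _ h
  loopless := by
    constructor
    rintro (a | b) h
    · exact A.loopless.irrefl a h
    · exact B.loopless.irrefl b h

/-!
The Laplacian of `A × B` is the block matrix with diagonal blocks `L(A) + b I`, `L(B) + a I` and
off-diagonal blocks filled with `-1`. Both diagonal blocks have constant row sums, so over the field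
of rational functions the Schur complement of the first block in the characteristic matrix is the
second block minus a constant matrix, whose determinant the matrix determinant lemma gives. The
result is `(λ - b)(λ - a) L(λ, A × B) = ((λ - b)(λ - a) - ab) L(λ - b, A) L(λ - a, B)`; since
`(λ - b)(λ - a) - ab = λ(λ - a - b)`, cancelling `λ(λ - a)(λ - b)` gives the formula.
-/

open Polynomial Matrix

namespace Matrix

section CommRing

variable {R m n : Type*} [Fintype n]

theorem map_mulVec_one {S : Type*} [NonAssocSemiring R] [NonAssocSemiring S] (f : R →+* S)
    {M : Matrix m n R} {r : R} (hM : M *ᵥ 1 = r • 1) : M.map f *ᵥ 1 = f r • 1 := by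
  funext i
  simpa [hM] using (RingHom.map_mulVec f M 1 i).symm

variable [CommRing R] [DecidableEq n]

theorem charmatrix_mulVec_one {M : Matrix n n R} {s : R} (hM : M *ᵥ 1 = s • 1) :
    charmatrix M *ᵥ 1 = (X - C s) • 1 := by
  rw [charmatrix, sub_mulVec, RingHom.mapMatrix_apply, map_mulVec_one C hM, sub_smul]
  simp

theorem charpoly_add_scalar (M : Matrix n n R) (μ : R) :
    (M + scalar n μ).charpoly = M.charpoly.comp (X - C μ) := by
  simpa [sub_eq_add_neg] using M.charpoly_sub_scalar (-μ)

end CommRing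

variable {K m n : Type*} [Field K] [Fintype m] [DecidableEq m]

theorem inv_mulVec_one_of_mulVec_one {S : Matrix m m K} {s : K} (hS : S *ᵥ 1 = s • 1)
    (hs : s ≠ 0) (hdet : S.det ≠ 0) : S⁻¹ *ᵥ 1 = s⁻¹ • 1 := by
  have h : s • (S⁻¹ *ᵥ 1) = 1 := by
    rw [← mulVec_smul, ← hS, mulVec_mulVec, nonsing_inv_mul S (isUnit_iff_ne_zero.2 hdet),
      one_mulVec]
  calc S⁻¹ *ᵥ 1 = s⁻¹ • s • (S⁻¹ *ᵥ 1) := by rw [smul_smul, inv_mul_cancel₀ hs, one_smul]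
    _ = s⁻¹ • 1 := by rw [h]

theorem const_mul_inv_mul_const {S : Matrix m m K} {s : K} (hS : S *ᵥ 1 = s • 1)
    (hs : s ≠ 0) (hdet : S.det ≠ 0) (u v : K) :
    (of fun _ _ => v : Matrix n m K) * S⁻¹ * (of fun _ _ => u : Matrix m n K) =
      of fun _ _ => u * v * Fintype.card m / s := by
  have hrow := congrFun (inv_mulVec_one_of_mulVec_one hS hs hdet)
  simp only [mulVec, dotProduct, Pi.one_apply, mul_one, Pi.smul_apply, smul_eq_mul] at hrow
  ext i j
  simp only [mul_apply, of_apply, ← Finset.sum_mul, ← Finset.mul_sum]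
  rw [Finset.sum_comm]
  simp [hrow]
  ring

variable [Fintype n] [DecidableEq n]

theorem det_add_const_of_mulVec_one {T : Matrix n n K} {t : K} (hT : T *ᵥ 1 = t • 1)
    (ht : t ≠ 0) (hdet : T.det ≠ 0) (w : K) :
    (T + of fun _ _ => w).det = T.det * (1 + w * Fintype.card n / t) := by
  have hrankOne : (of fun _ _ => w : Matrix n n K) =
      (replicateCol Unit (w • 1) : Matrix n Unit K) * (replicateRow Unit 1 : Matrix Unit n K) := by
    ext; simp [mul_apply]
  rw [hrankOne, det_add_replicateCol_mul_replicateRow (isUnit_iff_ne_zero.2 hdet),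
    Matrix.mul_assoc, ← replicateCol_mulVec, replicateRow_mul_replicateCol, det_unique (n := Unit),
    add_apply, of_apply, mulVec_smul, inv_mulVec_one_of_mulVec_one hT ht hdet]
  simp only [one_apply_eq, dotProduct, Pi.one_apply, Pi.smul_apply, smul_eq_mul, one_mul,
    Finset.sum_const, Finset.card_univ, nsmul_eq_mul]
  ring

theorem det_fromBlocks_const_offDiag {S : Matrix m m K} {T : Matrix n n K} {s t : K}
    (hS : S *ᵥ 1 = s • 1) (hT : T *ᵥ 1 = t • 1) (hs : s ≠ 0) (ht : t ≠ 0)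
    (hSdet : S.det ≠ 0) (hTdet : T.det ≠ 0) (u v : K) :
    (fromBlocks S (of fun _ _ => u) (of fun _ _ => v) T).det =
      S.det * T.det * (1 - u * v * Fintype.card m * Fintype.card n / (s * t)) := by
  have := S.invertibleOfIsUnitDet (isUnit_iff_ne_zero.2 hSdet)
  have hschur : T - (of fun _ _ => u * v * Fintype.card m / s : Matrix n n K) =
      T + of fun _ _ => -(u * v * Fintype.card m / s) := by
    ext; simp [sub_eq_add_neg]
  rw [det_fromBlocks₁₁, invOf_eq_nonsing_inv, const_mul_inv_mul_const hS hs hSdet, hschur,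
    det_add_const_of_mulVec_one hT ht hTdet]
  field_simp
  ring

theorem charpoly_fromBlocks_const_offDiag {M : Matrix m m K} {N : Matrix n n K} {s t : K}
    (hM : M *ᵥ 1 = s • 1) (hN : N *ᵥ 1 = t • 1) (u v : K) :
    (X - C s) * (X - C t) * (fromBlocks M (of fun _ _ => u) (of fun _ _ => v) N).charpoly =
      ((X - C s) * (X - C t) - C (u * v * Fintype.card m * Fintype.card n)) *
        M.charpoly * N.charpoly := by
  set J := fromBlocks M (of fun _ _ => u) (of fun _ _ => v) N
  set φ := algebraMap K[X] (RatFunc K)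
  have hφ : Function.Injective φ := RatFunc.algebraMap_injective K
  have hdetM : φ M.charpoly = ((charmatrix M).map φ).det := RingHom.map_det φ _
  have hdetN : φ N.charpoly = ((charmatrix N).map φ).det := RingHom.map_det φ _
  have hdetJ : φ J.charpoly = ((charmatrix J).map φ).det := RingHom.map_det φ _
  have hblocks : (charmatrix J).map φ =
      fromBlocks ((charmatrix M).map φ) (of fun _ _ => -φ (C u)) (of fun _ _ => -φ (C v))
        ((charmatrix N).map φ) := by
    rw [charmatrix_fromBlocks, fromBlocks_map]
    congr 1 <;> ext <;> simp
  have hs : φ (X - C s) ≠ 0 := (map_ne_zero_iff φ hφ).2 (X_sub_C_ne_zero s)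
  have ht : φ (X - C t) ≠ 0 := (map_ne_zero_iff φ hφ).2 (X_sub_C_ne_zero t)
  have hMdet := hdetM ▸ (map_ne_zero_iff φ hφ).2 M.charpoly_monic.ne_zero
  have hNdet := hdetN ▸ (map_ne_zero_iff φ hφ).2 N.charpoly_monic.ne_zero
  have key := det_fromBlocks_const_offDiag (map_mulVec_one φ (charmatrix_mulVec_one hM))
    (map_mulVec_one φ (charmatrix_mulVec_one hN)) hs ht hMdet hNdet (-φ (C u)) (-φ (C v))
  rw [← hblocks, ← hdetJ, ← hdetM, ← hdetN] at key
  have hC : φ (C (u * v * Fintype.card m * Fintype.card n)) =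
      -φ (C u) * -φ (C v) * Fintype.card m * Fintype.card n := by
    simp
  apply hφ
  rw [map_mul, map_mul, key, map_mul, map_mul, map_sub φ ((X - C s) * (X - C t)), map_mul, hC]
  field_simp

end Matrix

namespace SimpleGraph

theorem lapMatrix_add_scalar_mulVec_one {V R : Type*} [Fintype V] [DecidableEq V] [CommRing R]
    (G : SimpleGraph V) [DecidableRel G.Adj] (c : R) :
    (G.lapMatrix R + scalar V c) *ᵥ 1 = c • 1 := by
  have hzero : G.lapMatrix R *ᵥ 1 = 0 := G.lapMatrix_mulVec_const_eq_zero
  ext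
  simp [add_mulVec, hzero, scalar_apply]

variable {α β : Type*} (A : SimpleGraph α) (B : SimpleGraph β)

@[simp] theorem join_adj_inl_inl {a a' : α} : (A.join B).Adj (.inl a) (.inl a') ↔ A.Adj a a' :=
  Iff.rfl

@[simp] theorem join_adj_inr_inr {b b' : β} : (A.join B).Adj (.inr b) (.inr b') ↔ B.Adj b b' :=
  Iff.rfl

@[simp] theorem join_adj_inl_inr {a : α} {b : β} : (A.join B).Adj (.inl a) (.inr b) := trivial

@[simp] theorem join_adj_inr_inl {a : α} {b : β} : (A.join B).Adj (.inr b) (.inl a) := trivial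

variable [Fintype α] [Fintype β] [DecidableRel (A.join B).Adj]

theorem degree_join_inl [DecidableRel A.Adj] (a : α) :
    (A.join B).degree (.inl a) = A.degree a + Fintype.card β := by
  have : (A.join B).neighborFinset (.inl a) = (A.neighborFinset a).disjSum Finset.univ := by
    ext (x | x) <;> simp
  rw [← card_neighborFinset_eq_degree, this, Finset.card_disjSum, card_neighborFinset_eq_degree,
    Finset.card_univ]

theorem degree_join_inr [DecidableRel B.Adj] (b : β) :
    (A.join B).degree (.inr b) = B.degree b + Fintype.card α := by
  have : (A.join B).neighborFinset (.inr b) = Finset.univ.disjSum (B.neighborFinset b) := by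
    ext (x | x) <;> simp
  rw [← card_neighborFinset_eq_degree, this, Finset.card_disjSum, card_neighborFinset_eq_degree,
    Finset.card_univ, add_comm]

theorem lapMatrix_join {R : Type*} [Ring R] [DecidableEq α] [DecidableEq β] [DecidableRel A.Adj]
    [DecidableRel B.Adj] :
    (A.join B).lapMatrix R =
      fromBlocks (A.lapMatrix R + scalar α (Fintype.card β : R)) (of fun _ _ => -1)
        (of fun _ _ => -1) (B.lapMatrix R + scalar β (Fintype.card α : R)) := by
  ext (i | i) (j | j) <;>
    simp [lapMatrix, degMatrix, Matrix.natCast_apply, diagonal_apply, degree_join_inl,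
      degree_join_inr] <;>
    by_cases h : i = j <;> simp [h]

end SimpleGraph

/-- If `A` is a simple graph on `a` vertices, `B` a simple graph on `b` vertices, and
`A × B` their join, then with `L(λ, H) = λ · P(λ, H)` the Laplacian characteristic
polynomial, `P(λ, A × B) = (λ − a − b) · P(λ − b, A) · P(λ − a, B)`. -/
theorem lap_charpoly_join {α β : Type*} [Fintype α] [Fintype β]
    [DecidableEq α] [DecidableEq β]
    (A : SimpleGraph α) (B : SimpleGraph β)
    [DecidableRel A.Adj] [DecidableRel B.Adj] [DecidableRel (A.join B).Adj]
    (pA pB pJ : Polynomial ℝ)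
    (hA : (A.lapMatrix ℝ).charpoly = Polynomial.X * pA)
    (hB : (B.lapMatrix ℝ).charpoly = Polynomial.X * pB)
    (hJ : ((A.join B).lapMatrix ℝ).charpoly = Polynomial.X * pJ) :
    pJ = (Polynomial.X - Polynomial.C ((Fintype.card α : ℝ) + (Fintype.card β : ℝ)))
        * (pA.comp (Polynomial.X - Polynomial.C (Fintype.card β : ℝ)))
        * (pB.comp (Polynomial.X - Polynomial.C (Fintype.card α : ℝ))) := by
  set a : ℝ := (Fintype.card α : ℝ)
  set b : ℝ := (Fintype.card β : ℝ)
  have key := charpoly_fromBlocks_const_offDiag (A.lapMatrix_add_scalar_mulVec_one b)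
    (B.lapMatrix_add_scalar_mulVec_one a) (-1) (-1)
  rw [← SimpleGraph.lapMatrix_join, hJ, charpoly_add_scalar, charpoly_add_scalar, hA, hB,
    mul_comp, mul_comp, X_comp, X_comp] at key
  have hne : (X * ((X - C a) * (X - C b)) : ℝ[X]) ≠ 0 :=
    mul_ne_zero X_ne_zero (mul_ne_zero (X_sub_C_ne_zero a) (X_sub_C_ne_zero b))
  refine mul_left_cancel₀ hne ?_
  simp only [C_add, C_mul, C_neg, C_1] at key ⊢
  linear_combination key
end

section
/- (Generalized Matrix Tree Theorem) Let G be a finite graph with vertex set V and X ⊆ V nonempty. Then det(L_X(G)) equals the number of spanning forests F of G such that every component of F contains exactly one vertex of X, where L_X(G) is the Laplacian matrix with the rows and columns indexed by X deleted. -/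
/-!
Each row of `L_X` is `∑_{c ~ a} (e_a - e_c)`, so multilinearity of the determinant writes
`det L_X` as a sum, over parent functions `f : V ∖ X → V` along edges of `G`, of `det (1 - P_f)`.
If iterating `f` always reaches `X`, then `f` strictly lowers the height (distance to `X` along
`f`), so `1 - P_f` is unitriangular and the determinant is `1`; otherwise the indicator of the
vertices that never reach `X` is a kernel vector and the determinant is `0`. Finally `f ↦ {a, f a}`
is a bijection from the parent functions reaching `X` onto the spanning forests whose components
each contain exactly one vertex of `X`: its inverse orients each forest towards `X`.
-/

open Finset

theorem Matrix.det_of_sum_smul_rows {n ι R : Type*} [Fintype n] [DecidableEq n] [Fintype ι]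
    [CommRing R] (w : n → ι → R) (r : n → ι → n → R) :
    (Matrix.of fun a => ∑ c, w a c • r a c).det =
      ∑ f : n → ι, (∏ a, w a (f a)) * (Matrix.of fun a => r a (f a)).det := by
  classical
  change Matrix.detRowAlternating.toMultilinearMap (fun a => ∑ c, w a c • r a c) = _
  simp only [MultilinearMap.map_sum, MultilinearMap.map_smul_univ, smul_eq_mul]
  rfl

namespace SimpleGraph

variable {V : Type*}

lemma IsAcyclic.mem_support_or_mem_support {F : SimpleGraph V} (hF : F.IsAcyclic) {u w x : V}
    {p : F.Walk u x} {q : F.Walk w x} (hp : p.IsPath) (hq : q.IsPath) (h : F.Adj u w) :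
    w ∈ p.support ∨ u ∈ q.support := by
  by_cases hu : u ∈ q.support
  · exact Or.inr hu
  · left
    simpa using hF.mem_support_of_ne_mem_support_of_adj_of_isPath hp.reverse hq.reverse h
      (by simpa using hu)

lemma lapMatrix_submatrix_eq_sum_smul [Fintype V] [DecidableEq V] (G : SimpleGraph V)
    [DecidableRel G.Adj] (X : Finset V) :
    (G.lapMatrix ℝ).submatrix (fun v : {v // v ∉ X} => (v : V)) (fun v : {v // v ∉ X} => (v : V)) =
      Matrix.of fun a : {v // v ∉ X} => ∑ c : V, (if G.Adj a c then (1 : ℝ) else 0) •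
        fun b : {v // v ∉ X} => (1 : Matrix {v // v ∉ X} {v // v ∉ X} ℝ) a b -
          if c = b then 1 else 0 := by
  ext a b
  simp only [Matrix.submatrix_apply, Matrix.of_apply, Finset.sum_apply, Pi.smul_apply,
    smul_eq_mul, mul_sub, Finset.sum_sub_distrib, ← Finset.sum_mul, ← degree_eq_sum_if_adj,
    lapMatrix, degMatrix, adjMatrix_apply, Matrix.sub_apply, Matrix.one_apply,
    Matrix.diagonal_apply, Subtype.ext_iff]
  simp

namespace MatrixTree

variable {X : Finset V} {f g : {v // v ∉ X} → V}

def forestOf (X : Finset V) (f : {v // v ∉ X} → V) : SimpleGraph V :=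
  fromEdgeSet (Set.range fun a : {v // v ∉ X} => s(↑a, f a))

lemma forestOf_adj {u w : V} :
    (forestOf X f).Adj u w ↔ (∃ a : {v // v ∉ X}, s(↑a, f a) = s(u, w)) ∧ u ≠ w := by
  simp [forestOf]

lemma forestOf_le {G : SimpleGraph V} (hG : ∀ a : {v // v ∉ X}, G.Adj a (f a)) :
    forestOf X f ≤ G := by
  rw [forestOf, fromEdgeSet_le]
  rintro _ ⟨⟨a, rfl⟩, -⟩
  exact hG a

variable [DecidableEq V]

def step (X : Finset V) (f : {v // v ∉ X} → V) (v : V) : V :=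
  if h : v ∈ X then v else f ⟨v, h⟩

lemma step_of_mem {v : V} (hv : v ∈ X) : step X f v = v := dif_pos hv

lemma step_coe (a : {v // v ∉ X}) : step X f a = f a := dif_neg a.2

def Reaches (X : Finset V) (f : {v // v ∉ X} → V) : Prop :=
  ∀ v, ∃ n, (step X f)^[n] v ∈ X

noncomputable def height (hf : Reaches X f) (v : V) : ℕ :=
  Nat.find (hf v)

lemma height_eq_zero (hf : Reaches X f) {v : V} (hv : v ∈ X) : height hf v = 0 :=
  (Nat.find_eq_zero (hf v)).mpr hv

lemma height_step (hf : Reaches X f) {v : V} (hv : v ∉ X) :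
    height hf (step X f v) + 1 = height hf v :=
  (Nat.find_comp_succ (hf v) (hf (step X f v)) hv).symm

lemma height_coe (hf : Reaches X f) (a : {v // v ∉ X}) : height hf (f a) + 1 = height hf a := by
  rw [← step_coe (f := f) a, height_step hf a.2]

lemma coe_ne_of_height_le (hf : Reaches X f) {a : {v // v ∉ X}} {v : V}
    (h : height hf a ≤ height hf v) : f a ≠ v := by
  rintro rfl
  have := height_coe hf a
  omega

noncomputable def root (hf : Reaches X f) (v : V) : V :=
  (step X f)^[height hf v] v

lemma root_mem (hf : Reaches X f) (v : V) : root hf v ∈ X :=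
  Nat.find_spec (hf v)

lemma root_of_mem (hf : Reaches X f) {v : V} (hv : v ∈ X) : root hf v = v := by
  rw [root, height_eq_zero hf hv, Function.iterate_zero_apply]

lemma root_step (hf : Reaches X f) (v : V) : root hf (step X f v) = root hf v := by
  by_cases hv : v ∈ X
  · rw [step_of_mem hv]
  · rw [root, root, ← height_step hf hv, Function.iterate_succ_apply]

lemma forestOf_adj_coe (hf : Reaches X f) (a : {v // v ∉ X}) : (forestOf X f).Adj a (f a) :=
  forestOf_adj.mpr ⟨⟨a, rfl⟩, (coe_ne_of_height_le hf le_rfl).symm⟩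

lemma forestOf_reachable_step (hf : Reaches X f) (v : V) :
    (forestOf X f).Reachable v (step X f v) := by
  by_cases hv : v ∈ X
  · rw [step_of_mem hv]
  · rw [show v = ↑(⟨v, hv⟩ : {v // v ∉ X}) from rfl, step_coe]
    exact (forestOf_adj_coe hf _).reachable

lemma forestOf_reachable_root (hf : Reaches X f) (v : V) :
    (forestOf X f).Reachable v (root hf v) := by
  suffices ∀ n, (forestOf X f).Reachable v ((step X f)^[n] v) from this _
  intro n
  induction n with
  | zero => rfl
  | succ n ih => exact ih.trans (Function.iterate_succ_apply' _ _ _ ▸ forestOf_reachable_step hf _)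

lemma root_eq_of_adj (hf : Reaches X f) {u w : V} (h : (forestOf X f).Adj u w) :
    root hf u = root hf w := by
  obtain ⟨⟨a, ha⟩, -⟩ := forestOf_adj.mp h
  rcases Sym2.eq_iff.mp ha with ⟨rfl, rfl⟩ | ⟨rfl, rfl⟩
  all_goals rw [← step_coe (f := f), root_step]

lemma root_eq_of_reachable (hf : Reaches X f) {u w : V} (h : (forestOf X f).Reachable u w) :
    root hf u = root hf w := by
  obtain ⟨p⟩ := h
  induction p with
  | nil => rfl
  | cons h _ ih => exact (root_eq_of_adj hf h).trans ih

lemma forestOf_existsUnique_mem (hf : Reaches X f) (c : (forestOf X f).ConnectedComponent) :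
    ∃! x, x ∈ X ∧ (forestOf X f).connectedComponentMk x = c := by
  induction c using ConnectedComponent.ind with
  | _ v =>
    refine ⟨root hf v, ⟨root_mem hf v, ConnectedComponent.sound (forestOf_reachable_root hf v).symm⟩,
      fun x ⟨hx, hxv⟩ => ?_⟩
    rw [← root_eq_of_reachable hf (ConnectedComponent.exact hxv), root_of_mem hf hx]

lemma eq_step_of_forestOf_adj (hf : Reaches X f) {u w : V} (h : (forestOf X f).Adj u w)
    (hw : height hf w ≤ height hf u) : w = step X f u := by
  obtain ⟨⟨a, ha⟩, -⟩ := forestOf_adj.mp h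
  rcases Sym2.eq_iff.mp ha with ⟨rfl, rfl⟩ | ⟨rfl, rfl⟩
  · exact (step_coe a).symm
  · have := height_coe hf a
    omega

lemma forestOf_isAcyclic (hf : Reaches X f) : (forestOf X f).IsAcyclic := by
  -- a vertex of maximal height on a cycle would have both cycle neighbours equal to its parent
  intro v c hc
  obtain ⟨u, hu, hmax⟩ := exists_max_image c.support.toFinset (height hf) ⟨v, by simp⟩
  have hu : u ∈ c.support := List.mem_toFinset.mp hu
  set c' := c.rotate u hu
  have hc' : c'.IsCycle := hc.rotate hu
  have hle (i : ℕ) : height hf (c'.getVert i) ≤ height hf u :=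
    hmax _ (List.mem_toFinset.mpr ((c.mem_support_rotate_iff u hu).mp (c'.getVert_mem_support i)))
  apply hc'.snd_ne_penultimate
  rw [eq_step_of_forestOf_adj hf (c'.adj_snd hc'.not_nil) (hle 1),
    eq_step_of_forestOf_adj hf (c'.adj_penultimate hc'.not_nil).symm (hle _)]

lemma eq_of_forestOf_eq (hf : Reaches X f) (h : forestOf X f = forestOf X g) : f = g := by
  -- if `f a ≠ g a`, the edge `{a, f a}` is `{b, g b}` with `b = f a` and `g b = a`; by induction
  -- on the height `f b = g b`, so `f (f a) = a`, impossible as `f` lowers the height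
  funext a
  induction hn : height hf a using Nat.strong_induction_on generalizing a with
  | _ n ih =>
  by_contra hne
  obtain ⟨⟨b, hb⟩, -⟩ := forestOf_adj.mp (h ▸ forestOf_adj_coe hf a)
  rcases Sym2.eq_iff.mp hb with ⟨hba, hgb⟩ | ⟨hbf, hgb⟩
  · exact hne (by rw [← hgb, Subtype.ext hba])
  · have hlt : height hf b < n := by rw [← hn, ← height_coe hf a, ← hbf]; omega
    exact coe_ne_of_height_le hf (by omega) ((ih _ hlt b rfl).trans hgb)

lemma exists_reaches_forestOf_eq {F : SimpleGraph V} (hF : F.IsAcyclic)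
    (hX : ∀ c : F.ConnectedComponent, ∃! x, x ∈ X ∧ F.connectedComponentMk x = c) :
    ∃ f : {v // v ∉ X} → V, Reaches X f ∧ forestOf X f = F := by
  choose r hr_mem hr_mk using fun v => (hX (F.connectedComponentMk v)).exists
  have r_eq {u w : V} (h : F.Reachable u w) : r u = r w :=
    (hX _).unique ⟨hr_mem u, (hr_mk u).trans (ConnectedComponent.sound h)⟩ ⟨hr_mem w, hr_mk w⟩
  have r_of_mem {v : V} (hv : v ∈ X) : r v = v :=
    (hX _).unique ⟨hr_mem v, hr_mk v⟩ ⟨hv, rfl⟩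
  -- the parent of `a` is the second vertex of a shortest path from `a` to the root of its component
  choose p hp hp_len using fun v => (ConnectedComponent.exact (hr_mk v)).symm.exists_path_of_dist
  have hp_not_nil (a : {v // v ∉ X}) : ¬ (p a).Nil :=
    Walk.not_nil_of_ne fun h => a.2 (h ▸ hr_mem a)
  refine ⟨fun a => (p a).snd, fun v => ?_, ?_⟩
  · induction hn : F.dist v (r v) using Nat.strong_induction_on generalizing v with
    | _ n ih =>
    by_cases hv : v ∈ X
    · exact ⟨0, hv⟩
    · set a : {v // v ∉ X} := ⟨v, hv⟩
      have hlt : F.dist (p a).snd (r (p a).snd) < n := by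
        rw [← r_eq ((p a).adj_snd (hp_not_nil a)).reachable, ← hn, ← hp_len,
          ← Walk.length_tail_add_one (hp_not_nil a)]
        exact Nat.lt_succ_of_le (dist_le _)
      obtain ⟨k, hk⟩ := ih _ hlt _ rfl
      exact ⟨k + 1, by rwa [Function.iterate_succ_apply, show v = ↑a from rfl, step_coe]⟩
  · have adj_of_mem_support {u w : V} (h : F.Adj u w) (hw : w ∈ (p u).support) :
        (forestOf X fun a => (p a).snd).Adj u w := by
      have hw_snd := hF.eq_snd_of_adj_start (hp u) h hw
      have hu : u ∉ X := fun hu => h.ne <| by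
        rw [hw_snd, Walk.snd, Walk.getVert_of_length_le _ (by simp [hp_len, r_of_mem hu]),
          r_of_mem hu]
      exact forestOf_adj.mpr ⟨⟨⟨u, hu⟩, by rw [← hw_snd]⟩, h.ne⟩
    ext u w
    refine ⟨fun h => ?_, fun h => ?_⟩
    · obtain ⟨⟨a, ha⟩, -⟩ := forestOf_adj.mp h
      rcases Sym2.eq_iff.mp ha with ⟨rfl, rfl⟩ | ⟨rfl, rfl⟩
      · exact (p a).adj_snd (hp_not_nil a)
      · exact ((p a).adj_snd (hp_not_nil a)).symm
    · have hr := r_eq h.reachable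
      rcases hF.mem_support_or_mem_support (hp u) ((Walk.isPath_copy _ rfl hr.symm).mpr (hp w)) h
        with hw | hu
      · exact adj_of_mem_support h hw
      · exact (adj_of_mem_support h.symm (by simpa using hu)).symm

lemma image_forestOf (G : SimpleGraph V) :
    forestOf X '' {f | (∀ a : {v // v ∉ X}, G.Adj a (f a)) ∧ Reaches X f} =
      {F : SimpleGraph V | F ≤ G ∧ F.IsAcyclic ∧
        ∀ c : F.ConnectedComponent, ∃! x, x ∈ X ∧ F.connectedComponentMk x = c} := by
  ext F
  constructor
  · rintro ⟨f, ⟨hG, hf⟩, rfl⟩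
    exact ⟨forestOf_le hG, forestOf_isAcyclic hf, forestOf_existsUnique_mem hf⟩
  · rintro ⟨hFG, hF, hX⟩
    obtain ⟨f, hf, rfl⟩ := exists_reaches_forestOf_eq hF hX
    exact ⟨f, ⟨fun a => hFG (forestOf_adj_coe hf a), hf⟩, rfl⟩

variable [Fintype V]

def parentMatrix (X : Finset V) (f : {v // v ∉ X} → V) : Matrix {v // v ∉ X} {v // v ∉ X} ℝ :=
  1 - Matrix.of fun a (b : {v // v ∉ X}) => if f a = b then 1 else 0

lemma det_parentMatrix_of_reaches (hf : Reaches X f) : (parentMatrix X f).det = 1 := by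
  let b (a : {v // v ∉ X}) : ℕᵒᵈ := OrderDual.toDual (height hf a)
  have htri : (parentMatrix X f).BlockTriangular b := fun a c hlt => by
    have hac : a ≠ c := by rintro rfl; exact lt_irrefl _ hlt
    simp [parentMatrix, Matrix.one_apply_ne hac, coe_ne_of_height_le hf hlt.le]
  rw [htri.det]
  refine Finset.prod_eq_one fun k _ => ?_
  suffices (parentMatrix X f).toSquareBlock b k = 1 by rw [this, Matrix.det_one]
  ext ⟨a, ha⟩ ⟨c, hc⟩
  have hac : height hf a = height hf c := OrderDual.toDual.injective (ha.trans hc.symm)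
  simp [Matrix.toSquareBlock_def, parentMatrix, Matrix.one_apply, coe_ne_of_height_le hf hac.le]

lemma det_parentMatrix_of_not_reaches (hf : ¬ Reaches X f) : (parentMatrix X f).det = 0 := by
  classical
  let Escapes (v : V) : Prop := ∀ n, (step X f)^[n] v ∉ X
  have escapes_coe (a : {v // v ∉ X}) : Escapes (f a) ↔ Escapes a := by
    refine ⟨fun h n => ?_, fun h n => ?_⟩
    · cases n with
      | zero => exact a.2
      | succ n => rw [Function.iterate_succ_apply, step_coe]; exact h n
    · simpa [Function.iterate_succ_apply, step_coe] using h (n + 1)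
  obtain ⟨v, hv⟩ : ∃ v, Escapes v := by simpa [Reaches] using hf
  rw [← Matrix.exists_mulVec_eq_zero_iff]
  refine ⟨fun b => if Escapes b then 1 else 0, fun h => by simpa [hv] using congrFun h ⟨v, hv 0⟩, ?_⟩
  rw [parentMatrix, Matrix.sub_mulVec, Matrix.one_mulVec, sub_eq_zero]
  funext a
  have hsum : ∑ b : {v // v ∉ X}, (if f a = b then (1 : ℝ) else 0) * (if Escapes b then 1 else 0)
      = if Escapes a then 1 else 0 := by
    rw [← escapes_coe]
    by_cases hX : f a ∈ X
    · rw [if_neg fun h => h 0 hX]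
      exact Finset.sum_eq_zero fun b _ => by rw [if_neg fun h : f a = b => b.2 (h ▸ hX), zero_mul]
    · rw [Finset.sum_eq_single_of_mem ⟨f a, hX⟩ (mem_univ _) fun b _ hb => by
        rw [if_neg fun h => hb (Subtype.ext h.symm), zero_mul]]
      simp
  exact hsum.symm

lemma det_lapMatrix_submatrix_eq_ncard (G : SimpleGraph V) [DecidableRel G.Adj] (X : Finset V) :
    ((G.lapMatrix ℝ).submatrix (fun v : {v // v ∉ X} => (v : V))
        (fun v : {v // v ∉ X} => (v : V))).det =
      Set.ncard {f : {v // v ∉ X} → V | (∀ a : {v // v ∉ X}, G.Adj a (f a)) ∧ Reaches X f} := by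
  classical
  rw [lapMatrix_submatrix_eq_sum_smul, Matrix.det_of_sum_smul_rows, Set.ncard_eq_toFinset_card',
    Set.toFinset_ofPred, Finset.natCast_card_filter]
  refine Finset.sum_congr rfl fun f _ => ?_
  have hM : (Matrix.of fun a b => (1 : Matrix {v // v ∉ X} {v // v ∉ X} ℝ) a b -
      if f a = b then 1 else 0) = parentMatrix X f := rfl
  rw [Finset.prod_boole, hM]
  by_cases hf : Reaches X f
  · simp [det_parentMatrix_of_reaches hf, hf]
  · simp [det_parentMatrix_of_not_reaches hf, hf]

end MatrixTree

end SimpleGraph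

theorem det_lap_submatrix_eq_forestCount_general {V : Type*} [Fintype V] [DecidableEq V]
    (G : SimpleGraph V) [DecidableRel G.Adj] (X : Finset V) :
    ((G.lapMatrix ℝ).submatrix (fun v : {v : V // v ∉ X} => (v : V))
        (fun v : {v : V // v ∉ X} => (v : V))).det =
      (Set.ncard {F : SimpleGraph V | F ≤ G ∧ F.IsAcyclic ∧
        ∀ c : F.ConnectedComponent, ∃! x, x ∈ X ∧ F.connectedComponentMk x = c} : ℝ) := by
  open SimpleGraph.MatrixTree in
  rw [det_lapMatrix_submatrix_eq_ncard, ← image_forestOf G,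
    Set.InjOn.ncard_image fun f hf _ _ h => eq_of_forestOf_eq hf.2 h]

/-- Generalized Matrix Tree Theorem: for a finite graph `G` with vertex set `V` and a
nonempty `X ⊆ V`, the determinant of `L_X(G)` (the Laplacian with the rows and columns
indexed by `X` deleted) equals the number of spanning forests `F` of `G` such that every
connected component of `F` contains exactly one vertex of `X`. -/
theorem det_lap_submatrix_eq_forestCount {V : Type*} [Fintype V] [DecidableEq V]
    (G : SimpleGraph V) [DecidableRel G.Adj] (X : Finset V) (hX : X.Nonempty) :
    ((G.lapMatrix ℝ).submatrix (fun v : {v : V // v ∉ X} => (v : V))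
        (fun v : {v : V // v ∉ X} => (v : V))).det =
      (Set.ncard {F : SimpleGraph V | F ≤ G ∧ F.IsAcyclic ∧
        ∀ c : F.ConnectedComponent, ∃! x, x ∈ X ∧ F.connectedComponentMk x = c} : ℝ) :=
  det_lap_submatrix_eq_forestCount_general G X
end

section
/- Let G be a finite simple graph with m edges and Laplacian coefficients c_s(G) as defined via det(λI − L(G)) = λ · Σ_s (−1)^s c_s(G) λ^{n−1−s}. Then for every s ∈ {0, ..., m}, (m − s)·c_s(G) = Σ_{e ∈ E(G)} c_s(G − e). -/
/-- `γ(F)`: the product over the connected components of `F` of the number of vertices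
of the component (sensible when `F` is a forest). -/
noncomputable def gammaProd {V : Type*} (F : SimpleGraph V) : ℕ :=
  ∏ᶠ c : F.ConnectedComponent, Nat.card {v : V // F.connectedComponentMk v = c}

/-- The combinatorial Laplacian coefficient:
`c_s(G) = Σ { γ(F) : F a spanning forest of G with s edges }`. -/
noncomputable def forestCoeff {V : Type*} (G : SimpleGraph V) (s : ℕ) : ℕ :=
  ∑ᶠ F ∈ {F : SimpleGraph V | F ≤ G ∧ F.IsAcyclic ∧ F.edgeSet.ncard = s}, gammaProd F

namespace SimpleGraph

variable {V : Type*}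

theorem le_deleteEdges_iff {F G : SimpleGraph V} {s : Set (Sym2 V)} :
    F ≤ G.deleteEdges s ↔ F ≤ G ∧ Disjoint F.edgeSet s := by
  simp only [← edgeSet_subset_edgeSet, edgeSet_deleteEdges, Set.subset_sdiff]

/-- Double counting of the pairs `(e, F)` with `F ≤ G` and `e ∈ E(G) \ E(F)`. -/
theorem finsum_mem_edgeSet_finsum_le_deleteEdges {M : Type*} [AddCommMonoid M] [Finite V]
    (G : SimpleGraph V) (P : SimpleGraph V → Prop) (w : SimpleGraph V → M) :
    ∑ᶠ e ∈ G.edgeSet, ∑ᶠ F ∈ {F | F ≤ G.deleteEdges {e} ∧ P F}, w F =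
      ∑ᶠ F ∈ {F | F ≤ G ∧ P F}, (G.edgeSet.ncard - F.edgeSet.ncard) • w F := by
  classical
  have := Fintype.ofFinite V
  simp only [finsum_mem_eq_toFinset_sum]
  rw [Finset.sum_comm' (t' := {F | F ≤ G ∧ P F}.toFinset)
    (s' := fun F => (G.edgeSet \ F.edgeSet).toFinset)]
  · refine Finset.sum_congr rfl fun F hF => ?_
    rw [Finset.sum_const, ← Set.ncard_eq_toFinset_card',
      Set.ncard_sdiff (edgeSet_mono (Set.mem_toFinset.1 hF).1)]
  · intro e F
    simp only [Set.mem_toFinset, Set.mem_ofPred_eq, Set.mem_sdiff, le_deleteEdges_iff,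
      Set.disjoint_singleton_right]
    tauto

end SimpleGraph

theorem forestCoeff_recursion_general {n : ℕ} (G : SimpleGraph (Fin n)) (s : ℕ) :
    (G.edgeSet.ncard - s) * forestCoeff G s =
      ∑ᶠ e ∈ G.edgeSet, forestCoeff (G.deleteEdges {e}) s := by
  simp only [forestCoeff, mul_finsum_mem,
    G.finsum_mem_edgeSet_finsum_le_deleteEdges (fun F => F.IsAcyclic ∧ F.edgeSet.ncard = s)]
  exact finsum_mem_congr rfl fun F hF => by rw [hF.2.2, smul_eq_mul]

/-- For a finite simple graph `G` with `m` edges and every `s ∈ {0, …, m}`,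
`(m − s) · c_s(G) = Σ_{e ∈ E(G)} c_s(G − e)`. -/
theorem forestCoeff_recursion {n : ℕ} (G : SimpleGraph (Fin n)) (s : ℕ)
    (hs : s ≤ G.edgeSet.ncard) :
    (G.edgeSet.ncard - s) * forestCoeff G s =
      ∑ᶠ e ∈ G.edgeSet, forestCoeff (G.deleteEdges {e}) s :=
  forestCoeff_recursion_general G s
end

section
/- For a finite simple graph G on n ≥ 2 vertices, the largest Laplacian eigenvalue satisfies λ_max(G) ≤ max{d(x) + d(y) : x, y ∈ V(G), x ≠ y}. -/
/-!
Take an eigenvector `v` for the eigenvalue `t`, a vertex `x` where `|v|` is largest and a vertex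
`y ≠ x` where `|v|` is largest among the remaining vertices. Reading the eigenvalue equation
`(t - d x) v x = -∑_{u ~ x} v u` at `x` and at `y` gives `|t - d x| |v x| ≤ d x |v y|` and
`|t - d y| |v y| ≤ d y |v x|`; multiplying the two shows that `t > d x + d y` is impossible.
-/

open Matrix Polynomial

section Arithmetic

variable {R : Type*} [Field R] [LinearOrder R] [IsStrictOrderedRing R]

theorem le_add_of_abs_sub_mul_le {t a b p q : R} (ha : 0 ≤ a) (hb : 0 ≤ b) (hp : 0 < p)
    (hq : 0 ≤ q) (hx : |t - a| * p ≤ a * q) (hy : |t - b| * q ≤ b * p) : t ≤ a + b := by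
  by_contra! h
  have hta : b < |t - a| := by rw [abs_of_pos (by linarith)]; linarith
  have htb : a < |t - b| := by rw [abs_of_pos (by linarith)]; linarith
  nlinarith [mul_le_mul hx hy (by positivity) (by positivity), mul_pos hp hp,
    mul_nonneg hq hq, mul_nonneg ha hb]

end Arithmetic

theorem Matrix.exists_mulVec_eq_smul_of_isRoot_charpoly {K m : Type*} [Field K] [Fintype m]
    [DecidableEq m] {M : Matrix m m K} {t : K} (ht : M.charpoly.IsRoot t) :
    ∃ v ≠ 0, M *ᵥ v = t • v := by
  rw [IsRoot.def, eval_charpoly, ← exists_mulVec_eq_zero_iff] at ht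
  obtain ⟨v, hv0, hv⟩ := ht
  refine ⟨v, hv0, ?_⟩
  rwa [sub_mulVec, scalar_apply, ← smul_one_eq_diagonal, smul_mulVec, one_mulVec,
    sub_eq_zero, eq_comm] at hv

namespace SimpleGraph

variable {V R : Type*} [Fintype V] [DecidableEq V] (G : SimpleGraph V) [DecidableRel G.Adj]
  [Field R] [LinearOrder R] [IsStrictOrderedRing R]

theorem abs_sub_degree_mul_le_degree_mul {v : V → R} {t : R} (hv : G.lapMatrix R *ᵥ v = t • v)
    (x : V) {c : R} (hc : ∀ u ∈ G.neighborFinset x, |v u| ≤ c) :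
    |t - G.degree x| * |v x| ≤ G.degree x * c := by
  have hx : (t - G.degree x) * v x = -∑ u ∈ G.neighborFinset x, v u := by
    have := congrFun hv x
    rw [lapMatrix_mulVec_apply, Pi.smul_apply, smul_eq_mul] at this
    linear_combination -this
  calc |t - G.degree x| * |v x| = |∑ u ∈ G.neighborFinset x, v u| := by
        rw [← abs_mul, hx, abs_neg]
    _ ≤ ∑ u ∈ G.neighborFinset x, |v u| := Finset.abs_sum_le_sum_abs _ _
    _ ≤ ∑ _u ∈ G.neighborFinset x, c := Finset.sum_le_sum hc
    _ = G.degree x * c := by rw [Finset.sum_const, card_neighborFinset_eq_degree, nsmul_eq_mul]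

theorem exists_ne_le_degree_add_degree_of_lapMatrix_mulVec_eq_smul [Nontrivial V] {v : V → R}
    {t : R} (hv0 : v ≠ 0) (hv : G.lapMatrix R *ᵥ v = t • v) :
    ∃ x y, x ≠ y ∧ t ≤ G.degree x + G.degree y := by
  obtain ⟨x, hx⟩ := Finite.exists_max fun i ↦ |v i|
  obtain ⟨y₀, hy₀⟩ := exists_ne x
  obtain ⟨y, hyx, hy⟩ := Finset.exists_max_image (Finset.univ.erase x) (fun i ↦ |v i|)
    ⟨y₀, Finset.mem_erase.2 ⟨hy₀, Finset.mem_univ _⟩⟩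
  have hvx : 0 < |v x| := by
    obtain ⟨i, hi⟩ := Function.ne_iff.1 hv0
    exact (abs_pos.2 hi).trans_le (hx i)
  have hxnbr : ∀ u ∈ G.neighborFinset x, |v u| ≤ |v y| := fun u hu ↦
    hy u (Finset.mem_erase.2 ⟨(G.ne_of_adj ((G.mem_neighborFinset x u).1 hu)).symm,
      Finset.mem_univ _⟩)
  refine ⟨x, y, (Finset.ne_of_mem_erase hyx).symm, le_add_of_abs_sub_mul_le (by positivity)
    (by positivity) hvx (abs_nonneg _) (G.abs_sub_degree_mul_le_degree_mul hv x hxnbr)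
    (G.abs_sub_degree_mul_le_degree_mul hv y fun u _ ↦ hx u)⟩

end SimpleGraph

/-- For a finite simple graph `G` on `n ≥ 2` vertices, the largest Laplacian eigenvalue
satisfies `λ_max(G) ≤ max{d(x) + d(y) : x ≠ y}`; here `μ` is the nondecreasing
enumeration (with multiplicity) of the Laplacian eigenvalues, so `λ_max = μ (n-1)`, and
the bound is expressed by exhibiting a pair `x ≠ y` with `μ (n-1) ≤ d(x) + d(y)`. -/
theorem lap_eigenvalue_le_max_degree_sum {n : ℕ} (hn : 2 ≤ n) (G : SimpleGraph (Fin n))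
    [DecidableRel G.Adj] (μ : Fin n → ℝ)
    (hch : (G.lapMatrix ℝ).charpoly = ∏ i, (Polynomial.X - Polynomial.C (μ i))) :
    ∃ x y : Fin n, x ≠ y ∧ μ ⟨n - 1, by omega⟩ ≤ (G.degree x : ℝ) + (G.degree y : ℝ) := by
  have hroot : (G.lapMatrix ℝ).charpoly.IsRoot (μ ⟨n - 1, by omega⟩) := by
    simp [hch, eval_prod, Finset.prod_eq_zero_iff, sub_eq_zero]
  have : Nontrivial (Fin n) := Fin.nontrivial_iff_two_le.2 hn
  obtain ⟨v, hv0, hv⟩ := Matrix.exists_mulVec_eq_smul_of_isRoot_charpoly hroot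
  exact G.exists_ne_le_degree_add_degree_of_lapMatrix_mulVec_eq_smul hv0 hv
end
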